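/- arXiv:2007.06109 — 6 statements merged into one kernel-verified Lean document; each statement's English description precedes it below -/
import Mathlib

section
/- Let 0 < λ ≤ 1 and 0 < φ < π. Define g(θ) = sin^λ((φ−θ)/2) + sin^λ((φ+θ)/2) for θ ∈ [−φ, φ]. Then g attains its maximum value on [−φ, φ] only at θ = 0. -/
/-! Both `sin` (on `[0, π]`) and `x ↦ x ^ λ` (on `[0, ∞)`, increasing for `λ > 0`) are concave, the
first strictly, so `x ↦ sin x ^ λ` is strictly concave on `[0, π]`. Since `(φ - θ) / 2` and
`(φ + θ) / 2` lie in `[0, π]` and have midpoint `φ / 2`, strict concavity gives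
`g θ < 2 sin (φ / 2) ^ λ = g 0` whenever `θ ≠ 0`. -/

open Real Set

theorem StrictConcaveOn.add_lt_two_mul_map_midpoint {E : Type*} [AddCommGroup E] [Module ℝ E]
    {s : Set E} {f : E → ℝ} (hf : StrictConcaveOn ℝ s f) {x y : E} (hx : x ∈ s) (hy : y ∈ s)
    (hxy : x ≠ y) : f x + f y < 2 * f (midpoint ℝ x y) := by
  have hmid : (1 / 2 : ℝ) • x + (1 / 2 : ℝ) • y = midpoint ℝ x y := by
    rw [midpoint_eq_smul_add, smul_add, invOf_eq_inv, one_div]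
  have h := hf.2 hx hy hxy (by norm_num : (0 : ℝ) < 1 / 2) (by norm_num : (0 : ℝ) < 1 / 2)
    (by norm_num)
  rw [hmid, smul_eq_mul, smul_eq_mul] at h
  linarith

theorem Real.strictConcaveOn_sin_rpow_Icc {p : ℝ} (hp₀ : 0 < p) (hp₁ : p ≤ 1) :
    StrictConcaveOn ℝ (Icc 0 π) (fun x ↦ sin x ^ p) := by
  have hsin_nonneg : sin '' Icc 0 π ⊆ Ici 0 := image_subset_iff.2 fun _ ↦ sin_nonneg_of_mem_Icc
  have hsin_convex : Convex ℝ (sin '' Icc 0 π) :=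
    (isPreconnected_Icc.image _ continuous_sin.continuousOn).convex
  exact ((concaveOn_rpow hp₀.le hp₁).subset hsin_nonneg hsin_convex).comp_strictConcaveOn
    strictConcaveOn_sin_Icc ((strictMonoOn_rpow_Ici_of_exponent_pos hp₀).mono hsin_nonneg)

theorem stmt_0_general (lam φ : ℝ) (hlam0 : 0 < lam) (hlam1 : lam ≤ 1)
    (hφπ : φ < π) :
    ∀ θ ∈ Icc (-φ) φ, θ ≠ 0 →
      Real.sin ((φ - θ) / 2) ^ lam + Real.sin ((φ + θ) / 2) ^ lam
        < Real.sin ((φ - 0) / 2) ^ lam + Real.sin ((φ + 0) / 2) ^ lam := by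
  rintro θ ⟨hθ_lower, hθ_upper⟩ hθ0
  have hmem_sub : (φ - θ) / 2 ∈ Icc 0 π := ⟨by linarith, by linarith⟩
  have hmem_add : (φ + θ) / 2 ∈ Icc 0 π := ⟨by linarith, by linarith⟩
  have hne : (φ - θ) / 2 ≠ (φ + θ) / 2 := fun h ↦ hθ0 (by linarith)
  have hmid : midpoint ℝ ((φ - θ) / 2) ((φ + θ) / 2) = φ / 2 := by
    rw [midpoint_eq_smul_add, invOf_eq_inv, smul_eq_mul]
    ring
  have key := (strictConcaveOn_sin_rpow_Icc hlam0 hlam1).add_lt_two_mul_map_midpoint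
    hmem_sub hmem_add hne
  rw [hmid] at key
  simpa only [sub_zero, add_zero, two_mul] using key

theorem stmt_0 (lam φ : ℝ) (hlam0 : 0 < lam) (hlam1 : lam ≤ 1)
    (hφ0 : 0 < φ) (hφπ : φ < π) :
    ∀ θ ∈ Icc (-φ) φ, θ ≠ 0 →
      Real.sin ((φ - θ) / 2) ^ lam + Real.sin ((φ + θ) / 2) ^ lam
        < Real.sin ((φ - 0) / 2) ^ lam + Real.sin ((φ + 0) / 2) ^ lam :=
  stmt_0_general lam φ hlam0 hlam1 hφπ
end

section
/- Let 0 < λ ≤ 1 and let z₁ ≠ z₂ be two points on the unit circle S¹ ⊂ ℂ. Let γ be one of the two closed arcs of S¹ connecting z₁ and z₂. Then the function z ↦ |z − z₁|^λ + |z − z₂|^λ attains its maximum on γ at a unique point, namely the midpoint of the arc γ. -/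
/-! The chord from `e^{iα}` to `e^{it}` has length `2 sin ((t - α) / 2)`, so with
`u = (t - α) / 2` and `v = (β - t) / 2` the function to maximise is `g u + g v` where
`g x = (2 sin x) ^ λ` and `u + v = (β - α) / 2` is fixed. Since `2 sin` is strictly concave and
nonnegative on `[0, π]` and `x ↦ x ^ λ` is concave and increasing, `g` is strictly concave there,
so `g u + g v < 2 g ((u + v) / 2)` unless `u = v`, i.e. unless `t` is the midpoint of the arc. -/

open Real Set Complex

section StrictConcave

variable {E : Type*} [AddCommMonoid E] [SMul ℝ E] {s : Set E} {f : E → ℝ}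

theorem StrictConcaveOn.const_mul {c : ℝ} (hc : 0 < c) (hf : StrictConcaveOn ℝ s f) :
    StrictConcaveOn ℝ s (fun x ↦ c * f x) := by
  refine ⟨hf.1, fun x hx y hy hxy a b ha hb hab ↦ ?_⟩
  have h := mul_lt_mul_of_pos_left (hf.2 hx hy hxy ha hb hab) hc
  simp only [smul_eq_mul] at h ⊢
  linarith

theorem StrictConcaveOn.rpow {p : ℝ} (hf : StrictConcaveOn ℝ s f) (hf₀ : ∀ x ∈ s, 0 ≤ f x)
    (hp₀ : 0 < p) (hp₁ : p ≤ 1) : StrictConcaveOn ℝ s (fun x ↦ f x ^ p) := by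
  refine ⟨hf.1, fun x hx y hy hxy a b ha hb hab ↦ ?_⟩
  calc a • f x ^ p + b • f y ^ p ≤ (a • f x + b • f y) ^ p :=
        (concaveOn_rpow hp₀.le hp₁).2 (hf₀ x hx) (hf₀ y hy) ha.le hb.le hab
    _ < f (a • x + b • y) ^ p :=
        rpow_lt_rpow (add_nonneg (smul_nonneg ha.le (hf₀ x hx)) (smul_nonneg hb.le (hf₀ y hy)))
          (hf.2 hx hy hxy ha hb hab) hp₀

end StrictConcave

theorem StrictConcaveOn.add_lt_two_mul_apply_midpoint {s : Set ℝ} {f : ℝ → ℝ}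
    (hf : StrictConcaveOn ℝ s f) {x y : ℝ} (hx : x ∈ s) (hy : y ∈ s) (hxy : x ≠ y) :
    f x + f y < 2 * f ((x + y) / 2) := by
  have h := hf.2 hx hy hxy (by norm_num : (0 : ℝ) < 1 / 2) (by norm_num : (0 : ℝ) < 1 / 2)
    (by norm_num)
  simp only [smul_eq_mul] at h
  rw [show 1 / 2 * x + 1 / 2 * y = (x + y) / 2 by ring] at h
  linarith

theorem strictConcaveOn_two_mul_sin_rpow {p : ℝ} (hp₀ : 0 < p) (hp₁ : p ≤ 1) :
    StrictConcaveOn ℝ (Icc 0 π) (fun x ↦ (2 * Real.sin x) ^ p) :=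
  (strictConcaveOn_sin_Icc.const_mul two_pos).rpow
    (fun _ hx ↦ mul_nonneg zero_le_two (sin_nonneg_of_nonneg_of_le_pi hx.1 hx.2)) hp₀ hp₁

theorem norm_exp_mul_I_sub_exp_mul_I {s t : ℝ} (hst : s ≤ t) (hts : t ≤ s + 2 * π) :
    ‖exp (t * I) - exp (s * I)‖ = 2 * Real.sin ((t - s) / 2) := by
  have h : exp (t * I) - exp (s * I) = exp (s * I) * (exp (I * ↑(t - s)) - 1) := by
    rw [mul_sub, ← Complex.exp_add, mul_one]
    push_cast
    ring_nf
  rw [h, norm_mul, norm_exp_ofReal_mul_I, one_mul, norm_exp_I_mul_ofReal_sub_one, Real.norm_eq_abs,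
    abs_of_nonneg (mul_nonneg zero_le_two (sin_nonneg_of_nonneg_of_le_pi (by linarith) (by linarith)))]

theorem stmt_1_general (lam α β : ℝ) (hlam0 : 0 < lam) (hlam1 : lam ≤ 1)
    (hb : β < α + 2 * π) :
    ∀ t ∈ Icc α β, t ≠ (α + β) / 2 →
      ‖Complex.exp ((t : ℂ) * Complex.I) - Complex.exp ((α : ℂ) * Complex.I)‖ ^ lam
        + ‖Complex.exp ((t : ℂ) * Complex.I) - Complex.exp ((β : ℂ) * Complex.I)‖ ^ lam
      < ‖Complex.exp ((((α + β) / 2 : ℝ) : ℂ) * Complex.I) - Complex.exp ((α : ℂ) * Complex.I)‖ ^ lam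
        + ‖Complex.exp ((((α + β) / 2 : ℝ) : ℂ) * Complex.I) - Complex.exp ((β : ℂ) * Complex.I)‖ ^ lam := by
  rintro t ⟨hαt, htβ⟩ hne
  rw [norm_exp_mul_I_sub_exp_mul_I hαt (by linarith), norm_sub_rev,
    norm_exp_mul_I_sub_exp_mul_I htβ (by linarith),
    norm_exp_mul_I_sub_exp_mul_I (by linarith) (by linarith), norm_sub_rev,
    norm_exp_mul_I_sub_exp_mul_I (by linarith) (by linarith),
    show ((α + β) / 2 - α) / 2 = ((t - α) / 2 + (β - t) / 2) / 2 by ring,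
    show (β - (α + β) / 2) / 2 = ((t - α) / 2 + (β - t) / 2) / 2 by ring, ← two_mul]
  refine (strictConcaveOn_two_mul_sin_rpow hlam0 hlam1).add_lt_two_mul_apply_midpoint
    ⟨by linarith, by linarith⟩ ⟨by linarith, by linarith⟩ fun h ↦ hne ?_
  linarith

theorem stmt_1 (lam α β : ℝ) (hlam0 : 0 < lam) (hlam1 : lam ≤ 1)
    (hab : α < β) (hb : β < α + 2 * π) :
    ∀ t ∈ Icc α β, t ≠ (α + β) / 2 →
      ‖Complex.exp ((t : ℂ) * Complex.I) - Complex.exp ((α : ℂ) * Complex.I)‖ ^ lam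
        + ‖Complex.exp ((t : ℂ) * Complex.I) - Complex.exp ((β : ℂ) * Complex.I)‖ ^ lam
      < ‖Complex.exp ((((α + β) / 2 : ℝ) : ℂ) * Complex.I) - Complex.exp ((α : ℂ) * Complex.I)‖ ^ lam
        + ‖Complex.exp ((((α + β) / 2 : ℝ) : ℂ) * Complex.I) - Complex.exp ((β : ℂ) * Complex.I)‖ ^ lam :=
  stmt_1_general lam α β hlam0 hlam1 hb
end

section
/- Let λ > 2, and let a be a fixed point on the unit sphere S^d ⊂ ℝ^{d+1}, d ≥ 1. Then the function x ↦ |x − a|^λ + |x + a|^λ on S^d attains its maximum value 2^λ only at the points x = a and x = −a. -/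
/-! Write `‖y‖ ^ λ = (‖y‖ ^ 2) ^ (λ / 2)`. On the unit sphere the parallelogram law gives
`‖x - a‖ ^ 2 + ‖x + a‖ ^ 2 = 4`, and for `λ > 2` the map `t ↦ t ^ (λ / 2)` is strictly superadditive
on positive reals, so the sum is at most `4 ^ (λ / 2) = 2 ^ λ`, with equality only when one of the
two distances vanishes. -/

open Real

namespace Real

theorem add_rpow_lt_rpow_add {p u v : ℝ} (hu : 0 < u) (hv : 0 < v) (hp : 1 < p) :
    u ^ p + v ^ p < (u + v) ^ p := by
  have hp1 : 0 < p - 1 := by linarith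
  have mul_rpow_sub_one {w : ℝ} (hw : 0 < w) : w ^ p = w * w ^ (p - 1) := by
    rw [rpow_sub_one hw.ne']; field_simp
  calc u ^ p + v ^ p = u * u ^ (p - 1) + v * v ^ (p - 1) := by
        rw [mul_rpow_sub_one hu, mul_rpow_sub_one hv]
    _ < u * (u + v) ^ (p - 1) + v * (u + v) ^ (p - 1) := by
        gcongr <;> linarith
    _ = (u + v) ^ p := by rw [mul_rpow_sub_one (add_pos hu hv)]; ring

theorem sq_rpow_div_two {t : ℝ} (ht : 0 ≤ t) (p : ℝ) : (t ^ 2) ^ (p / 2) = t ^ p := by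
  rw [rpow_div_two_eq_sqrt p (sq_nonneg t), sqrt_sq ht]

end Real

section UnitSphere

variable {E : Type*} [NormedAddCommGroup E] [InnerProductSpace ℝ E] {x a : E}

theorem norm_sub_sq_add_norm_add_sq_of_norm_eq_one (hx : ‖x‖ = 1) (ha : ‖a‖ = 1) :
    ‖x - a‖ ^ 2 + ‖x + a‖ ^ 2 = 4 := by
  have := parallelogram_law_with_norm ℝ x a
  rw [hx, ha] at this
  linear_combination this

theorem two_rpow_eq_four_rpow_div_two (p : ℝ) : (2 : ℝ) ^ p = 4 ^ (p / 2) := by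
  rw [← sq_rpow_div_two zero_le_two p]; norm_num

theorem norm_sub_rpow_add_norm_add_rpow_le (hx : ‖x‖ = 1) (ha : ‖a‖ = 1) {p : ℝ} (hp : 2 ≤ p) :
    ‖x - a‖ ^ p + ‖x + a‖ ^ p ≤ 2 ^ p := by
  rw [← sq_rpow_div_two (norm_nonneg (x - a)), ← sq_rpow_div_two (norm_nonneg (x + a)),
    two_rpow_eq_four_rpow_div_two, ← norm_sub_sq_add_norm_add_sq_of_norm_eq_one hx ha]
  exact add_rpow_le_rpow_add (sq_nonneg _) (sq_nonneg _) (by linarith)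

theorem norm_sub_rpow_add_norm_add_rpow_lt (hx : ‖x‖ = 1) (ha : ‖a‖ = 1) {p : ℝ} (hp : 2 < p)
    (hxa : x ≠ a) (hxa' : x ≠ -a) :
    ‖x - a‖ ^ p + ‖x + a‖ ^ p < 2 ^ p := by
  rw [← sq_rpow_div_two (norm_nonneg (x - a)), ← sq_rpow_div_two (norm_nonneg (x + a)),
    two_rpow_eq_four_rpow_div_two, ← norm_sub_sq_add_norm_add_sq_of_norm_eq_one hx ha]
  refine add_rpow_lt_rpow_add ?_ ?_ (by linarith)
  · exact pow_pos (norm_pos_iff.mpr (sub_ne_zero.mpr hxa)) 2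
  · exact pow_pos (norm_pos_iff.mpr fun h ↦ hxa' (eq_neg_of_add_eq_zero_left h)) 2

theorem norm_sub_rpow_add_norm_add_rpow_self (ha : ‖a‖ = 1) {p : ℝ} (hp : p ≠ 0) :
    ‖a - a‖ ^ p + ‖a + a‖ ^ p = 2 ^ p := by
  rw [sub_self, norm_zero, zero_rpow hp, zero_add, ← two_smul ℝ a, norm_smul, ha]
  norm_num

end UnitSphere

theorem stmt_2_general (d : ℕ) (lam : ℝ) (hlam : 2 < lam)
    (a : EuclideanSpace ℝ (Fin (d + 1)))
    (ha : a ∈ Metric.sphere (0 : EuclideanSpace ℝ (Fin (d + 1))) 1) :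
    (∀ x ∈ Metric.sphere (0 : EuclideanSpace ℝ (Fin (d + 1))) 1,
        ‖x - a‖ ^ lam + ‖x + a‖ ^ lam ≤ 2 ^ lam) ∧
    ‖a - a‖ ^ lam + ‖a + a‖ ^ lam = 2 ^ lam ∧
    ‖(-a) - a‖ ^ lam + ‖(-a) + a‖ ^ lam = 2 ^ lam ∧
    (∀ x ∈ Metric.sphere (0 : EuclideanSpace ℝ (Fin (d + 1))) 1,
        ‖x - a‖ ^ lam + ‖x + a‖ ^ lam = 2 ^ lam → x = a ∨ x = -a) := by
  simp only [mem_sphere_zero_iff_norm] at ha ⊢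
  have hlam0 : lam ≠ 0 := by positivity
  refine ⟨fun x hx ↦ norm_sub_rpow_add_norm_add_rpow_le hx ha hlam.le,
    norm_sub_rpow_add_norm_add_rpow_self ha hlam0, ?_, fun x hx heq ↦ ?_⟩
  · rw [neg_add_cancel, neg_sub_left, norm_neg, ← sub_self a, add_comm]
    exact norm_sub_rpow_add_norm_add_rpow_self ha hlam0
  · by_contra! hne
    exact (norm_sub_rpow_add_norm_add_rpow_lt hx ha hlam hne.1 hne.2).ne heq

theorem stmt_2 (d : ℕ) (hd : 1 ≤ d) (lam : ℝ) (hlam : 2 < lam)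
    (a : EuclideanSpace ℝ (Fin (d + 1)))
    (ha : a ∈ Metric.sphere (0 : EuclideanSpace ℝ (Fin (d + 1))) 1) :
    (∀ x ∈ Metric.sphere (0 : EuclideanSpace ℝ (Fin (d + 1))) 1,
        ‖x - a‖ ^ lam + ‖x + a‖ ^ lam ≤ 2 ^ lam) ∧
    ‖a - a‖ ^ lam + ‖a + a‖ ^ lam = 2 ^ lam ∧
    ‖(-a) - a‖ ^ lam + ‖(-a) + a‖ ^ lam = 2 ^ lam ∧
    (∀ x ∈ Metric.sphere (0 : EuclideanSpace ℝ (Fin (d + 1))) 1,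
        ‖x - a‖ ^ lam + ‖x + a‖ ^ lam = 2 ^ lam → x = a ∨ x = -a) :=
  stmt_2_general d lam hlam a ha
end

section
/- Let λ > 0, d ≥ 1, and let (aₙ)ₙ₌₀^∞ ⊂ S^d be a sequence such that for every n ≥ 1, aₙ maximizes the function x ↦ Σ_{k=0}^{n−1} |x − a_k|^λ over S^d. Then a_{2k+1} = −a_{2k} for every k ≥ 0, and for every even index n = 2k ≥ 2 the potential U_{2k}(x) = Σ_{j=0}^{2k−1} |x − a_j|^λ satisfies U_{2k}(x) = U_{2k}(−x) for all x ∈ S^d. -/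
/-!
If the potential `U_n` of the first `n` points is even, then `-a n` is as good a point
for `U_n` as the maximizer `a n`, and it gains the largest possible extra term
`‖-a n - a n‖ ^ λ = 2 ^ λ`. Since `a (n + 1)` maximizes `U_{n+1} = U_n + ‖· - a n‖ ^ λ`,
it must gain at least `2 ^ λ` as well, which on the unit sphere of a strictly convex space
forces `a (n + 1) = -a n`. Adding an antipodal pair keeps the potential even, so the two
facts propagate along even indices by induction.
-/

open Finset Metric

section GreedyEnergy

variable {E : Type*}

noncomputable def potential [SeminormedAddCommGroup E] (a : ℕ → E) (lam : ℝ) (n : ℕ)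
    (x : E) : ℝ :=
  ∑ k ∈ range n, ‖x - a k‖ ^ lam

section Seminormed

variable [SeminormedAddCommGroup E] {a : ℕ → E} {lam : ℝ} {n : ℕ}

@[simp]
lemma potential_zero (x : E) : potential a lam 0 x = 0 := by
  simp [potential]

lemma potential_succ (x : E) :
    potential a lam (n + 1) x = potential a lam n x + ‖x - a n‖ ^ lam :=
  sum_range_succ _ _

lemma potential_add_two_neg (heven : ∀ x, potential a lam n (-x) = potential a lam n x)
    (hanti : a (n + 1) = -a n) (x : E) :
    potential a lam (n + 2) (-x) = potential a lam (n + 2) x := by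
  have hflip : ‖-x - a n‖ = ‖x - -a n‖ := by
    rw [← norm_neg, neg_sub, sub_neg_eq_add, sub_neg_eq_add, add_comm]
  rw [potential_succ, potential_succ, potential_succ, potential_succ, heven, hanti, neg_sub_neg,
    norm_sub_rev (a n), hflip]
  ring

lemma isMaxOn_potential_zero (s : Set E) (y : E) : IsMaxOn (potential a lam 0) s y :=
  isMaxOn_iff.2 fun _ _ => by simp

end Seminormed

variable [NormedAddCommGroup E] [NormedSpace ℝ E] [StrictConvexSpace ℝ E]
  {a : ℕ → E} {lam : ℝ} {n : ℕ}

lemma eq_neg_of_two_le_norm_sub {x y : E} (hx : ‖x‖ = 1) (hy : ‖y‖ = 1) (h : 2 ≤ ‖x - y‖) :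
    x = -y := by
  refine eq_of_norm_eq_of_norm_add_eq (by rw [norm_neg, hx, hy]) (le_antisymm ?_ ?_)
  · exact norm_add_le _ _
  · rw [norm_neg, hx, hy, ← sub_eq_add_neg]
    linarith

lemma eq_neg_of_isMaxOn_potential (hlam : 0 < lam) (hsphere : ∀ n, a n ∈ sphere (0 : E) 1)
    (hmax : IsMaxOn (potential a lam n) (sphere 0 1) (a n))
    (hmax_succ : IsMaxOn (potential a lam (n + 1)) (sphere 0 1) (a (n + 1)))
    (heven : potential a lam n (-a n) = potential a lam n (a n)) :
    a (n + 1) = -a n := by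
  have hnorm : ∀ m, ‖a m‖ = 1 := fun m => mem_sphere_zero_iff_norm.1 (hsphere m)
  have hfar : ‖-a n - a n‖ = 2 := by
    rw [← neg_add', norm_neg, ← two_smul ℝ, norm_smul, hnorm]
    norm_num
  have hneg_mem : -a n ∈ sphere (0 : E) 1 := by
    rw [mem_sphere_zero_iff_norm, norm_neg, hnorm]
  have hgain : (2 : ℝ) ^ lam ≤ ‖a (n + 1) - a n‖ ^ lam := by
    have h₁ := isMaxOn_iff.1 hmax_succ (-a n) hneg_mem
    have h₂ := isMaxOn_iff.1 hmax (a (n + 1)) (hsphere _)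
    rw [potential_succ, potential_succ, hfar, heven] at h₁
    linarith
  rw [Real.rpow_le_rpow_iff zero_le_two (norm_nonneg _) hlam] at hgain
  exact eq_neg_of_two_le_norm_sub (hnorm _) (hnorm _) hgain

theorem greedy_antipodal_and_potential_even (hlam : 0 < lam)
    (hsphere : ∀ n, a n ∈ sphere (0 : E) 1)
    (hmax : ∀ n, 1 ≤ n → IsMaxOn (potential a lam n) (sphere 0 1) (a n)) (k : ℕ) :
    a (2 * k + 1) = -a (2 * k) ∧ ∀ x, potential a lam (2 * k) (-x) = potential a lam (2 * k) x := by
  have hmax' : ∀ n, IsMaxOn (potential a lam n) (sphere 0 1) (a n) := fun n => by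
    rcases Nat.eq_zero_or_pos n with rfl | hn
    · exact isMaxOn_potential_zero _ _
    · exact hmax n hn
  have step : ∀ k, (∀ x, potential a lam (2 * k) (-x) = potential a lam (2 * k) x) →
      a (2 * k + 1) = -a (2 * k) := fun k heven =>
    eq_neg_of_isMaxOn_potential hlam hsphere (hmax' _) (hmax' _) (heven _)
  induction k with
  | zero => exact ⟨step 0 fun _ => by simp, fun _ => by simp⟩
  | succ k ih =>
    have heven := potential_add_two_neg ih.2 ih.1
    exact ⟨step (k + 1) heven, heven⟩

end GreedyEnergy

theorem stmt_5_general (d : ℕ) (lam : ℝ) (hlam : 0 < lam)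
    (a : ℕ → EuclideanSpace ℝ (Fin (d + 1)))
    (hsphere : ∀ n, a n ∈ Metric.sphere (0 : EuclideanSpace ℝ (Fin (d + 1))) 1)
    (hgreedy : ∀ n, 1 ≤ n → ∀ x ∈ Metric.sphere (0 : EuclideanSpace ℝ (Fin (d + 1))) 1,
        ∑ k ∈ Finset.range n, ‖x - a k‖ ^ lam ≤ ∑ k ∈ Finset.range n, ‖a n - a k‖ ^ lam) :
    (∀ k : ℕ, a (2 * k + 1) = -a (2 * k)) ∧
    (∀ k : ℕ, 1 ≤ k → ∀ x ∈ Metric.sphere (0 : EuclideanSpace ℝ (Fin (d + 1))) 1,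
        ∑ j ∈ Finset.range (2 * k), ‖x - a j‖ ^ lam
          = ∑ j ∈ Finset.range (2 * k), ‖(-x) - a j‖ ^ lam) := by
  have main := greedy_antipodal_and_potential_even hlam hsphere
    fun n hn => isMaxOn_iff.2 (hgreedy n hn)
  exact ⟨fun k => (main k).1, fun k _ x _ => ((main k).2 x).symm⟩

theorem stmt_5 (d : ℕ) (hd : 1 ≤ d) (lam : ℝ) (hlam : 0 < lam)
    (a : ℕ → EuclideanSpace ℝ (Fin (d + 1)))
    (hsphere : ∀ n, a n ∈ Metric.sphere (0 : EuclideanSpace ℝ (Fin (d + 1))) 1)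
    (hgreedy : ∀ n, 1 ≤ n → ∀ x ∈ Metric.sphere (0 : EuclideanSpace ℝ (Fin (d + 1))) 1,
        ∑ k ∈ Finset.range n, ‖x - a k‖ ^ lam ≤ ∑ k ∈ Finset.range n, ‖a n - a k‖ ^ lam) :
    (∀ k : ℕ, a (2 * k + 1) = -a (2 * k)) ∧
    (∀ k : ℕ, 1 ≤ k → ∀ x ∈ Metric.sphere (0 : EuclideanSpace ℝ (Fin (d + 1))) 1,
        ∑ j ∈ Finset.range (2 * k), ‖x - a j‖ ^ lam
          = ∑ j ∈ Finset.range (2 * k), ‖(-x) - a j‖ ^ lam) :=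
  stmt_5_general d lam hlam a hsphere hgreedy
end

section
/- Let d ≥ 1. A sequence (aₙ)ₙ₌₀^∞ ⊂ S^d is a greedy λ-energy sequence for λ = 2 (i.e., each aₙ with n ≥ 1 maximizes x ↦ Σ_{k=0}^{n−1} |x − a_k|² on S^d) if and only if a_{2k+1} = −a_{2k} for every k ≥ 0. -/
open Finset

/-!
On the unit sphere `‖x - a‖² = 2 - 2⟪x, a⟫`, so maximizing `∑_{k<n} ‖x - a k‖²` over the sphere
means minimizing `⟪x, s⟫` for the partial sum `s = ∑_{k<n} a k`. If the points so far come in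
antipodal pairs, then `s = 0` when `n` is even (every point is a maximizer) and `s = a (n - 1)`
when `n` is odd, in which case the unique minimizer of `⟪x, s⟫` is `-a (n - 1)`. An induction over
the pairs gives both directions.
-/

section InnerProductSpace

variable {E : Type*} [NormedAddCommGroup E] [InnerProductSpace ℝ E]

theorem sum_range_norm_sub_sq_of_norm_eq_one {a : ℕ → E} (ha : ∀ k, ‖a k‖ = 1) {x : E}
    (hx : ‖x‖ = 1) (n : ℕ) :
    ∑ k ∈ range n, ‖x - a k‖ ^ 2 = 2 * n - 2 * inner ℝ x (∑ k ∈ range n, a k) := by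
  simp only [norm_sub_sq_real, hx, ha, inner_sum, mul_sum, sum_sub_distrib, sum_add_distrib,
    sum_const, card_range, nsmul_eq_mul]
  ring

theorem forall_sum_range_norm_sub_sq_le_iff {a : ℕ → E} (ha : ∀ k, ‖a k‖ = 1) {y : E}
    (hy : ‖y‖ = 1) (n : ℕ) :
    (∀ x ∈ Metric.sphere (0 : E) 1,
        ∑ k ∈ range n, ‖x - a k‖ ^ 2 ≤ ∑ k ∈ range n, ‖y - a k‖ ^ 2) ↔
      ∀ x ∈ Metric.sphere (0 : E) 1,
        inner ℝ y (∑ k ∈ range n, a k) ≤ inner ℝ x (∑ k ∈ range n, a k) := by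
  refine forall₂_congr fun x hx => ?_
  rw [mem_sphere_zero_iff_norm] at hx
  rw [sum_range_norm_sub_sq_of_norm_eq_one ha hx, sum_range_norm_sub_sq_of_norm_eq_one ha hy]
  constructor <;> intro h <;> linarith

theorem forall_inner_le_iff_eq_neg {u y : E} (hu : ‖u‖ = 1) (hy : ‖y‖ = 1) :
    (∀ x ∈ Metric.sphere (0 : E) 1, inner ℝ y u ≤ inner ℝ x u) ↔ y = -u := by
  constructor
  · intro h
    have hneg : inner ℝ y u ≤ -1 := by
      simpa [inner_neg_left, real_inner_self_eq_norm_sq, hu] using h (-u) (by simpa using hu)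
    exact (inner_eq_neg_one_iff_of_norm_eq_one hy hu).1
      (le_antisymm hneg (neg_one_le_real_inner_of_norm_eq_one hy hu))
  · rintro rfl x hx
    rw [inner_neg_left, real_inner_self_eq_norm_sq, hu, one_pow]
    exact neg_one_le_real_inner_of_norm_eq_one (by simpa using hx) hu

end InnerProductSpace

theorem sum_range_two_mul_eq_zero {G : Type*} [AddCommGroup G] {a : ℕ → G} {m : ℕ}
    (h : ∀ k < m, a (2 * k + 1) = -a (2 * k)) : ∑ i ∈ range (2 * m), a i = 0 := by
  induction m with
  | zero => simp
  | succ m ih =>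
    rw [Nat.mul_succ, sum_range_succ, sum_range_succ, ih fun k hk => h k (by omega),
      h m (by omega), zero_add, add_neg_cancel]

theorem stmt_6_general (d : ℕ)
    (a : ℕ → EuclideanSpace ℝ (Fin (d + 1)))
    (hsphere : ∀ n, a n ∈ Metric.sphere (0 : EuclideanSpace ℝ (Fin (d + 1))) 1) :
    (∀ n, 1 ≤ n → ∀ x ∈ Metric.sphere (0 : EuclideanSpace ℝ (Fin (d + 1))) 1,
        ∑ k ∈ Finset.range n, ‖x - a k‖ ^ 2 ≤ ∑ k ∈ Finset.range n, ‖a n - a k‖ ^ 2)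
    ↔ (∀ k : ℕ, a (2 * k + 1) = -a (2 * k)) := by
  have hnorm : ∀ n, ‖a n‖ = 1 := fun n => mem_sphere_zero_iff_norm.1 (hsphere n)
  have greedy_odd_iff : ∀ k, (∀ j < k, a (2 * j + 1) = -a (2 * j)) →
      ((∀ x ∈ Metric.sphere 0 1, ∑ i ∈ range (2 * k + 1), ‖x - a i‖ ^ 2 ≤
          ∑ i ∈ range (2 * k + 1), ‖a (2 * k + 1) - a i‖ ^ 2) ↔
        a (2 * k + 1) = -a (2 * k)) := by
    intro k hpairs
    rw [forall_sum_range_norm_sub_sq_le_iff hnorm (hnorm _), sum_range_succ,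
      sum_range_two_mul_eq_zero hpairs, zero_add]
    exact forall_inner_le_iff_eq_neg (hnorm _) (hnorm _)
  constructor
  · intro hgreedy k
    induction k using Nat.strong_induction_on with
    | _ k ih => exact (greedy_odd_iff k ih).1 (hgreedy _ (by omega))
  · intro hpairs n _
    obtain ⟨k, rfl | rfl⟩ := Nat.even_or_odd' n
    · rw [forall_sum_range_norm_sub_sq_le_iff hnorm (hnorm _),
        sum_range_two_mul_eq_zero fun j _ => hpairs j]
      simp
    · exact (greedy_odd_iff k fun j _ => hpairs j).2 (hpairs k)

theorem stmt_6 (d : ℕ) (hd : 1 ≤ d)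
    (a : ℕ → EuclideanSpace ℝ (Fin (d + 1)))
    (hsphere : ∀ n, a n ∈ Metric.sphere (0 : EuclideanSpace ℝ (Fin (d + 1))) 1) :
    (∀ n, 1 ≤ n → ∀ x ∈ Metric.sphere (0 : EuclideanSpace ℝ (Fin (d + 1))) 1,
        ∑ k ∈ Finset.range n, ‖x - a k‖ ^ 2 ≤ ∑ k ∈ Finset.range n, ‖a n - a k‖ ^ 2)
    ↔ (∀ k : ℕ, a (2 * k + 1) = -a (2 * k)) :=
  stmt_6_general d a hsphere
end

section
/- Let d ≥ 1 and let (aₙ)ₙ₌₀^∞ ⊂ S^d be a greedy 2-energy sequence. Then for every n ≥ 1: H₂(α_{2n}) = 8n² and H₂(α_{2n+1}) = 8(n² + n), where α_N = (a₀, …, a_{N−1}) and H₂(α_N) = Σ_{0 ≤ i ≠ j ≤ N−1} |a_i − a_j|². -/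
/-!
Writing `S = ∑ a_k`, for unit vectors `∑_k ‖x - a_k‖² = n‖x‖² - 2⟪x, S⟫ + n`, so a greedy point
minimises `⟪x, S⟫` on the sphere. Inductively the partial sums `S_{2k}` vanish: then `S_{2k+1} = a_{2k}`
is a unit vector, forcing `a_{2k+1} = -a_{2k}` and `S_{2k+2} = 0`. The energy of `N` unit vectors is
`2N² - 2‖S_N‖²`, which gives `8n²` for `N = 2n` and `8n² + 8n` for `N = 2n + 1`.
-/

open Finset

section InnerProductSpace

variable {E ι : Type*} [NormedAddCommGroup E] [InnerProductSpace ℝ E]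

theorem sum_norm_sub_sq (s : Finset ι) (v : ι → E) (x : E) :
    ∑ i ∈ s, ‖x - v i‖ ^ 2 = #s * ‖x‖ ^ 2 - 2 * inner ℝ x (∑ i ∈ s, v i) + ∑ i ∈ s, ‖v i‖ ^ 2 := by
  simp only [norm_sub_sq_real, sum_add_distrib, sum_sub_distrib, sum_const, nsmul_eq_mul,
    inner_sum, mul_sum]

theorem sum_sum_norm_sub_sq (s : Finset ι) (v : ι → E) :
    ∑ i ∈ s, ∑ j ∈ s, ‖v i - v j‖ ^ 2 = 2 * #s * ∑ i ∈ s, ‖v i‖ ^ 2 - 2 * ‖∑ i ∈ s, v i‖ ^ 2 := by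
  simp only [sum_norm_sub_sq, sum_add_distrib, sum_sub_distrib, sum_const, nsmul_eq_mul,
    ← mul_sum, ← sum_inner, real_inner_self_eq_norm_sq]
  ring

theorem sum_offDiag_norm_sub_sq [DecidableEq ι] (s : Finset ι) (v : ι → E) :
    ∑ p ∈ (s ×ˢ s).filter (fun p => p.1 ≠ p.2), ‖v p.1 - v p.2‖ ^ 2
      = 2 * #s * ∑ i ∈ s, ‖v i‖ ^ 2 - 2 * ‖∑ i ∈ s, v i‖ ^ 2 := by
  have hdiag : ∀ p ∈ s ×ˢ s, ‖v p.1 - v p.2‖ ^ 2 ≠ 0 → p.1 ≠ p.2 := fun p _ h hp => h (by simp [hp])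
  rw [sum_filter_of_ne hdiag, sum_product, sum_sum_norm_sub_sq]

theorem sum_offDiag_norm_sub_sq_of_norm_eq_one [DecidableEq ι] (s : Finset ι) {v : ι → E}
    (hv : ∀ i, ‖v i‖ = 1) :
    ∑ p ∈ (s ×ˢ s).filter (fun p => p.1 ≠ p.2), ‖v p.1 - v p.2‖ ^ 2
      = 2 * (#s : ℝ) ^ 2 - 2 * ‖∑ i ∈ s, v i‖ ^ 2 := by
  simp only [sum_offDiag_norm_sub_sq, hv, one_pow, sum_const, nsmul_eq_mul, mul_one]
  ring

theorem eq_neg_sum_of_forall_sum_norm_sub_sq_le (s : Finset ι) (v : ι → E) {y : E}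
    (hy : y ∈ Metric.sphere (0 : E) 1) (hu : ‖∑ i ∈ s, v i‖ = 1)
    (hmax : ∀ x ∈ Metric.sphere (0 : E) 1, ∑ i ∈ s, ‖x - v i‖ ^ 2 ≤ ∑ i ∈ s, ‖y - v i‖ ^ 2) :
    y = -∑ i ∈ s, v i := by
  rw [mem_sphere_zero_iff_norm] at hy
  have hle := hmax (-∑ i ∈ s, v i) (by rw [mem_sphere_zero_iff_norm, norm_neg, hu])
  rw [sum_norm_sub_sq, sum_norm_sub_sq, norm_neg, hu, hy, inner_neg_left,
    real_inner_self_eq_norm_sq, hu] at hle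
  refine (inner_eq_neg_one_iff_of_norm_eq_one (𝕜 := ℝ) hy hu).mp (le_antisymm ?_ ?_)
  · linarith
  · exact neg_one_le_real_inner_of_norm_eq_one hy hu

end InnerProductSpace

theorem sum_range_two_mul_eq_zero_of_greedy {E : Type*} [NormedAddCommGroup E]
    [InnerProductSpace ℝ E] {a : ℕ → E} (hsphere : ∀ n, a n ∈ Metric.sphere (0 : E) 1)
    (hgreedy : ∀ n, 1 ≤ n → ∀ x ∈ Metric.sphere (0 : E) 1,
        ∑ k ∈ range n, ‖x - a k‖ ^ 2 ≤ ∑ k ∈ range n, ‖a n - a k‖ ^ 2) (k : ℕ) :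
    ∑ j ∈ range (2 * k), a j = 0 := by
  induction k with
  | zero => simp
  | succ k ih =>
    have hodd : ∑ j ∈ range (2 * k + 1), a j = a (2 * k) := by
      rw [sum_range_succ, ih, zero_add]
    have hanti : a (2 * k + 1) = -a (2 * k) := by
      rw [← hodd]
      refine eq_neg_sum_of_forall_sum_norm_sub_sq_le _ _ (hsphere _) ?_ (hgreedy _ (by omega))
      rw [hodd, ← mem_sphere_zero_iff_norm]
      exact hsphere _
    rw [Nat.mul_succ, sum_range_succ, hodd, hanti, add_neg_cancel]

theorem stmt_7_general (d : ℕ)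
    (a : ℕ → EuclideanSpace ℝ (Fin (d + 1)))
    (hsphere : ∀ n, a n ∈ Metric.sphere (0 : EuclideanSpace ℝ (Fin (d + 1))) 1)
    (hgreedy : ∀ n, 1 ≤ n → ∀ x ∈ Metric.sphere (0 : EuclideanSpace ℝ (Fin (d + 1))) 1,
        ∑ k ∈ Finset.range n, ‖x - a k‖ ^ 2 ≤ ∑ k ∈ Finset.range n, ‖a n - a k‖ ^ 2) :
    ∀ n : ℕ, 1 ≤ n →
      (∑ p ∈ ((Finset.range (2 * n)) ×ˢ (Finset.range (2 * n))).filter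
          (fun p => p.1 ≠ p.2), ‖a p.1 - a p.2‖ ^ 2) = 8 * (n : ℝ) ^ 2 ∧
      (∑ p ∈ ((Finset.range (2 * n + 1)) ×ˢ (Finset.range (2 * n + 1))).filter
          (fun p => p.1 ≠ p.2), ‖a p.1 - a p.2‖ ^ 2) = 8 * ((n : ℝ) ^ 2 + n) := by
  intro n _
  have hnorm : ∀ k, ‖a k‖ = 1 := fun k => mem_sphere_zero_iff_norm.mp (hsphere k)
  have heven := sum_range_two_mul_eq_zero_of_greedy hsphere hgreedy n
  have hodd : ∑ j ∈ range (2 * n + 1), a j = a (2 * n) := by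
    rw [sum_range_succ, heven, zero_add]
  rw [sum_offDiag_norm_sub_sq_of_norm_eq_one _ hnorm, sum_offDiag_norm_sub_sq_of_norm_eq_one _ hnorm,
    heven, hodd, hnorm, norm_zero, card_range, card_range]
  push_cast
  constructor <;> ring

theorem stmt_7 (d : ℕ) (hd : 1 ≤ d)
    (a : ℕ → EuclideanSpace ℝ (Fin (d + 1)))
    (hsphere : ∀ n, a n ∈ Metric.sphere (0 : EuclideanSpace ℝ (Fin (d + 1))) 1)
    (hgreedy : ∀ n, 1 ≤ n → ∀ x ∈ Metric.sphere (0 : EuclideanSpace ℝ (Fin (d + 1))) 1,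
        ∑ k ∈ Finset.range n, ‖x - a k‖ ^ 2 ≤ ∑ k ∈ Finset.range n, ‖a n - a k‖ ^ 2) :
    ∀ n : ℕ, 1 ≤ n →
      (∑ p ∈ ((Finset.range (2 * n)) ×ˢ (Finset.range (2 * n))).filter
          (fun p => p.1 ≠ p.2), ‖a p.1 - a p.2‖ ^ 2) = 8 * (n : ℝ) ^ 2 ∧
      (∑ p ∈ ((Finset.range (2 * n + 1)) ×ˢ (Finset.range (2 * n + 1))).filter
          (fun p => p.1 ≠ p.2), ‖a p.1 - a p.2‖ ^ 2) = 8 * ((n : ℝ) ^ 2 + n) :=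
  stmt_7_general d a hsphere hgreedy
end
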